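/- arXiv:2402.01414 — 4 statements merged into one kernel-verified Lean document; each statement's English description precedes it below -/
import Mathlib

section
/- Let L be a distributive lattice and k, n ∈ ℕ with k ≤ n. For all x_1,...,x_n ∈ L, M_k(x_1,...,x_n) = M_k(x_1 ∧ x_2, x_1 ∨ x_2, x_3,...,x_n); that is, the k-th median is invariant under replacing the first two arguments by their meet and join. -/
def median {L : Type*} [DistribLattice L] {n : ℕ} (k : ℕ) (hk1 : 1 ≤ k) (hkn : k ≤ n)
    (x : Fin n → L) : L :=
  ((Finset.univ.powersetCard (n + 1 - k)).attach).sup'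
    (Finset.attach_nonempty_iff.mpr
      (Finset.powersetCard_nonempty.mpr (by simp [Finset.card_univ]; omega)))
    fun s => s.1.inf'
      (Finset.card_pos.mp (by
        have h := (Finset.mem_powersetCard.mp s.2).2
        omega)) x

def medianInf {L : Type*} [DistribLattice L] {n : ℕ} (k : ℕ) (hk1 : 1 ≤ k) (hkn : k ≤ n)
    (x : Fin n → L) : L :=
  ((Finset.univ.powersetCard (n + 1 - k)).attach).inf'
    (Finset.attach_nonempty_iff.mpr
      (Finset.powersetCard_nonempty.mpr (by simp [Finset.card_univ]; omega)))
    fun s => s.1.sup'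
      (Finset.card_pos.mp (by
        have h := (Finset.mem_powersetCard.mp s.2).2
        omega)) x

/-!
Let σ be the transposition of the first two indices. Since σ permutes the index sets of the
median, the median is also the join over all index sets S of `⋀_S x ⊔ ⋀_{σ S} x`. By
distributivity this equals `(⋀_P x ⊔ ⋀_{σ P} x) ⊓ ⋀_{S \ P} x` with `P = S ∩ {0, 1}`, and the
first factor is `⊤`, `x₀ ⊔ x₁` or `x₀ ⊓ x₁` according to the size of `P`. So each pair term, and
hence the median, depends on `x₀, x₁` only through their meet and join.
-/

open Finset Equiv
section
variable {ι α : Type*} [DecidableEq ι] [DistribLattice α] [OrderTop α]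
  {i j : ι} {f g : ι → α}

theorem inf_sup_inf_comp_swap_of_subset_pair (hinf : f i ⊓ f j = g i ⊓ g j)
    (hsup : f i ⊔ f j = g i ⊔ g j) {s : Finset ι} (hs : s ⊆ {i, j}) :
    s.inf f ⊔ s.inf (f ∘ swap i j) = s.inf g ⊔ s.inf (g ∘ swap i j) := by
  rw [← coe_subset, coe_pair, Set.subset_pair_iff_eq] at hs
  rcases hs with h | h | h | h <;> norm_cast at h <;> subst h
  · simp
  · simpa using hsup
  · simpa [sup_comm] using hsup
  · by_cases hij : i = j
    · subst hij; simpa using hinf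
    · simp [inf_comm (f j), inf_comm (g j), hinf]

theorem inf_sup_inf_comp_swap_eq (hoff : ∀ k, k ≠ i → k ≠ j → f k = g k)
    (hinf : f i ⊓ f j = g i ⊓ g j) (hsup : f i ⊔ f j = g i ⊔ g j) (s : Finset ι) :
    s.inf f ⊔ s.inf (f ∘ swap i j) = s.inf g ⊔ s.inf (g ∘ swap i j) := by
  have hne : ∀ k ∈ s \ {i, j}, k ≠ i ∧ k ≠ j := by
    intro k hk
    simp only [mem_sdiff, mem_insert, mem_singleton, not_or] at hk
    exact hk.2
  have hout (h : ι → α) : (s \ {i, j}).inf (h ∘ swap i j) = (s \ {i, j}).inf h :=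
    inf_congr rfl fun k hk => congrArg h (swap_apply_of_ne_of_ne (hne k hk).1 (hne k hk).2)
  have hfg : (s \ {i, j}).inf f = (s \ {i, j}).inf g :=
    inf_congr rfl fun k hk => hoff k (hne k hk).1 (hne k hk).2
  rw [← sdiff_union_inter s {i, j}]
  simp only [inf_union, hout, ← inf_sup_left, hfg,
    inf_sup_inf_comp_swap_of_subset_pair hinf hsup inter_subset_right]
end

theorem inf'_sup_inf'_comp_swap_eq {ι L : Type*} [DecidableEq ι] [DistribLattice L] {i j : ι}
    {x y : ι → L} (hoff : ∀ k, k ≠ i → k ≠ j → x k = y k)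
    (hinf : x i ⊓ x j = y i ⊓ y j) (hsup : x i ⊔ x j = y i ⊔ y j) {s : Finset ι}
    (hs : s.Nonempty) :
    s.inf' hs x ⊔ s.inf' hs (x ∘ swap i j) = s.inf' hs y ⊔ s.inf' hs (y ∘ swap i j) :=
  -- in `WithTop L` the infimum over the possibly empty part `s ∩ {i, j}` makes sense
  WithTop.coe_injective <| by
    simpa only [WithTop.coe_sup, coe_inf', Function.comp_assoc] using
      inf_sup_inf_comp_swap_eq (f := ((↑) ∘ x : ι → WithTop L)) (g := (↑) ∘ y)
        (fun k hki hkj => congrArg _ (hoff k hki hkj))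
        (by simpa using congrArg ((↑) : L → WithTop L) hinf)
        (by simpa using congrArg ((↑) : L → WithTop L) hsup) s

theorem nonempty_of_mem_powersetCard_succ_sub {n k : ℕ} (hkn : k ≤ n) {s : Finset (Fin n)}
    (hs : s ∈ univ.powersetCard (n + 1 - k)) : s.Nonempty := by
  rw [← card_pos, (mem_powersetCard.mp hs).2]
  omega

section
variable {L : Type*} [DistribLattice L] {n k : ℕ} (hk1 : 1 ≤ k) (hkn : k ≤ n)

theorem inf'_le_median (x : Fin n → L) {s : Finset (Fin n)}
    (hs : s ∈ univ.powersetCard (n + 1 - k)) (hne : s.Nonempty) :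
    s.inf' hne x ≤ median k hk1 hkn x :=
  le_sup'_of_le _ (mem_attach _ ⟨s, hs⟩) le_rfl

theorem median_le_median_of_pair_inf_sup_eq {x y : Fin n → L} {i j : Fin n}
    (hoff : ∀ l, l ≠ i → l ≠ j → x l = y l)
    (hinf : x i ⊓ x j = y i ⊓ y j) (hsup : x i ⊔ x j = y i ⊔ y j) :
    median k hk1 hkn x ≤ median k hk1 hkn y := by
  refine sup'_le _ _ fun ⟨s, hs⟩ _ => ?_
  have hne := nonempty_of_mem_powersetCard_succ_sub hkn hs
  have hσs : s.map (swap i j).toEmbedding ∈ univ.powersetCard (n + 1 - k) := by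
    simpa using hs
  calc s.inf' hne x
      ≤ s.inf' hne x ⊔ s.inf' hne (x ∘ swap i j) := le_sup_left
    _ = s.inf' hne y ⊔ s.inf' hne (y ∘ swap i j) :=
      inf'_sup_inf'_comp_swap_eq hoff hinf hsup hne
    _ = s.inf' hne y ⊔ (s.map (swap i j).toEmbedding).inf' hne.map y := by rw [inf'_map]; rfl
    _ ≤ median k hk1 hkn y :=
      sup_le (inf'_le_median hk1 hkn y hs hne) (inf'_le_median hk1 hkn y hσs _)

theorem median_eq_of_pair_inf_sup_eq {x y : Fin n → L} {i j : Fin n}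
    (hoff : ∀ l, l ≠ i → l ≠ j → x l = y l)
    (hinf : x i ⊓ x j = y i ⊓ y j) (hsup : x i ⊔ x j = y i ⊔ y j) :
    median k hk1 hkn x = median k hk1 hkn y :=
  le_antisymm (median_le_median_of_pair_inf_sup_eq hk1 hkn hoff hinf hsup)
    (median_le_median_of_pair_inf_sup_eq hk1 hkn (fun l hi hj => (hoff l hi hj).symm)
      hinf.symm hsup.symm)
end

/-- Replacing the first two arguments by their meet and join in either order
leaves every median unchanged. -/
theorem median_meet_join_invariant {L : Type*} [DistribLattice L] {n : ℕ}
    (hn : 2 ≤ n) (k : ℕ) (hk1 : 1 ≤ k) (hkn : k ≤ n) (x : Fin n → L) :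
    median k hk1 hkn x =
      median k hk1 hkn
        (Function.update
          (Function.update x ⟨0, by omega⟩ (x ⟨0, by omega⟩ ⊓ x ⟨1, by omega⟩))
          ⟨1, by omega⟩ (x ⟨0, by omega⟩ ⊔ x ⟨1, by omega⟩)) := by
  have h01 : (⟨0, by omega⟩ : Fin n) ≠ ⟨1, by omega⟩ := by simp
  refine median_eq_of_pair_inf_sup_eq hk1 hkn (i := ⟨0, by omega⟩) (j := ⟨1, by omega⟩)
    (fun l hl0 hl1 => ?_) ?_ ?_
  · rw [Function.update_of_ne hl1, Function.update_of_ne hl0]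
  · rw [Function.update_self, Function.update_of_ne h01, Function.update_self]
    exact (inf_eq_left.mpr inf_le_sup).symm
  · rw [Function.update_self, Function.update_of_ne h01, Function.update_self]
    exact (sup_eq_right.mpr inf_le_sup).symm
end

section
/- Let L be a distributive lattice and k ≤ m natural numbers. For all x_1,...,x_{m+1} ∈ L, if k ≥ 2 then M_{k}(x_1,...,x_m) ∧ (M_{k-1}(x_1,...,x_m) ∨ x_{m+1}) = M_k(x_1,...,x_{m+1}), and if k = 1 then M_1(x_1,...,x_m) ∧ x_{m+1} = M_1(x_1,...,x_{m+1}). -/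
open Finset

lemma le_median {L : Type*} [DistribLattice L] {n : ℕ} (k : ℕ) (hk1 : 1 ≤ k) (hkn : k ≤ n)
    (x : Fin n → L) (t : Finset (Fin n)) (ht : t.card = n + 1 - k) (hne : t.Nonempty) :
    t.inf' hne x ≤ median k hk1 hkn x := by
  have htm : t ∈ Finset.univ.powersetCard (n + 1 - k) :=
    mem_powersetCard.mpr ⟨subset_univ _, ht⟩
  refine le_trans ?_ (Finset.le_sup' _ (mem_attach _ ⟨t, htm⟩))
  exact le_rfl

lemma median_le {L : Type*} [DistribLattice L] {n : ℕ} (k : ℕ) (hk1 : 1 ≤ k) (hkn : k ≤ n)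
    (x : Fin n → L) (c : L)
    (h : ∀ (t : Finset (Fin n)), t.card = n + 1 - k → ∀ (hne : t.Nonempty),
      t.inf' hne x ≤ c) :
    median k hk1 hkn x ≤ c := by
  refine Finset.sup'_le _ _ fun s _ => ?_
  have hc := (Finset.mem_powersetCard.mp s.2).2
  exact h s.1 hc _

lemma sup'_inf_distrib' {L : Type*} [DistribLattice L] {ι : Type*} {s : Finset ι}
    (H : s.Nonempty) (f : ι → L) (a : L) :
    s.sup' H f ⊓ a = s.sup' H fun i => f i ⊓ a := by
  induction H using Finset.Nonempty.cons_induction with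
  | singleton b => rw [Finset.sup'_singleton, Finset.sup'_singleton]
  | cons b s hb hs ih => rw [Finset.sup'_cons (H := hs), Finset.sup'_cons (H := hs), inf_sup_right, ih]

lemma median_inf_le {L : Type*} [DistribLattice L] {n : ℕ} (k : ℕ) (hk1 : 1 ≤ k) (hkn : k ≤ n)
    (x : Fin n → L) (a c : L)
    (h : ∀ (t : Finset (Fin n)), t.card = n + 1 - k → ∀ (hne : t.Nonempty),
      t.inf' hne x ⊓ a ≤ c) :
    median k hk1 hkn x ⊓ a ≤ c := by
  rw [median, sup'_inf_distrib']
  refine Finset.sup'_le _ _ fun s _ => ?_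
  have hc := (Finset.mem_powersetCard.mp s.2).2
  exact h s.1 hc _

lemma median_mono {L : Type*} [DistribLattice L] {n : ℕ} (k k' : ℕ) (hk1 : 1 ≤ k) (hkn : k ≤ n)
    (hk1' : 1 ≤ k') (hkn' : k' ≤ n) (hkk : k' ≤ k) (x : Fin n → L) :
    median k' hk1' hkn' x ≤ median k hk1 hkn x := by
  refine median_le _ _ _ _ _ fun t ht hne => ?_
  obtain ⟨u, hu, hucard⟩ := Finset.exists_subset_card_eq (show n + 1 - k ≤ t.card by omega)
  have hune : u.Nonempty := Finset.card_pos.mp (by omega)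
  exact le_trans (Finset.inf'_mono x hu hune) (le_median k hk1 hkn x u hucard hune)

lemma subset_map_castSucc {m : ℕ} (t : Finset (Fin (m + 1))) (h : Fin.last m ∉ t) :
    ∃ u : Finset (Fin m), t = u.map Fin.castSuccEmb := by
  have hsub : t ⊆ Finset.univ.map Fin.castSuccEmb := by
    intro a ha
    obtain ⟨b, hb⟩ := Fin.exists_castSucc_eq.mpr (fun he => h (he ▸ ha))
    exact mem_map.mpr ⟨b, mem_univ _, hb⟩
  obtain ⟨u, _, hu⟩ := Finset.subset_map_iff.mp hsub
  exact ⟨u, hu⟩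

lemma inf'_map_castSucc {L : Type*} [DistribLattice L] {m : ℕ} (x : Fin (m + 1) → L)
    (u : Finset (Fin m)) (hu : u.Nonempty) (hne : (u.map Fin.castSuccEmb).Nonempty) :
    (u.map Fin.castSuccEmb).inf' hne x = u.inf' hu (x ∘ Fin.castSucc) := by
  rw [Finset.inf'_map]; rfl

/-- Passing from m elements to m+1 elements:
M_{k,m}(x₁,...,x_m) ⊓ (M_{k-1,m}(x₁,...,x_m) ⊔ x_{m+1}) = M_{k,m+1}(x₁,...,x_{m+1})
for 2 ≤ k ≤ m, while for k = 1 one has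
M_{1,m}(x₁,...,x_m) ⊓ x_{m+1} = M_{1,m+1}(x₁,...,x_{m+1}). -/
theorem median_succ {L : Type*} [DistribLattice L] {m : ℕ} (k : ℕ)
    (hk1 : 1 ≤ k) (hkm : k ≤ m) (x : Fin (m + 1) → L) :
    ((h2 : 2 ≤ k) →
      median k hk1 hkm (x ∘ Fin.castSucc) ⊓
          (median (k - 1) (by omega) (by omega) (x ∘ Fin.castSucc) ⊔ x (Fin.last m)) =
        median k hk1 (by omega) x) ∧
    (k = 1 →
      median 1 le_rfl (by omega) (x ∘ Fin.castSucc) ⊓ x (Fin.last m) =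
        median 1 le_rfl (by omega) x) := by
  constructor
  · intro h2
    apply le_antisymm
    · -- LHS ≤ median k x
      rw [inf_sup_left]
      have hmono : median k hk1 hkm (x ∘ Fin.castSucc) ⊓
          median (k - 1) (by omega) (by omega) (x ∘ Fin.castSucc) =
          median (k - 1) (by omega) (by omega) (x ∘ Fin.castSucc) :=
        inf_eq_right.mpr (median_mono k (k - 1) hk1 hkm (by omega) (by omega) (by omega) _)
      rw [hmono]
      apply sup_le
      · -- M_{k-1}(cs) ≤ M_k(m+1)
        refine median_le (k - 1) (by omega) (by omega) _ _ fun u hu hune => ?_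
        have hune' : (u.map Fin.castSuccEmb).Nonempty := Finset.map_nonempty.mpr hune
        rw [← inf'_map_castSucc x u hune hune']
        refine le_median k hk1 (by omega) x _ ?_ hune'
        rw [Finset.card_map]; omega
      · -- M_k(cs) ⊓ x last ≤ M_k(m+1)
        refine median_inf_le k hk1 hkm _ _ _ fun u hu hune => ?_
        have hune' : (u.map Fin.castSuccEmb).Nonempty := Finset.map_nonempty.mpr hune
        have hlast : Fin.last m ∉ u.map Fin.castSuccEmb := by
          simp only [mem_map]
          rintro ⟨b, -, hb⟩
          exact absurd hb (ne_of_lt (Fin.castSucc_lt_last b))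
        have hcard : (insert (Fin.last m) (u.map Fin.castSuccEmb)).card = m + 1 + 1 - k := by
          rw [Finset.card_insert_of_notMem hlast, Finset.card_map]; omega
        refine le_trans ?_
          (le_median k hk1 (by omega) x _ hcard (Finset.insert_nonempty _ _))
        rw [Finset.inf'_insert (H := hune'), inf'_map_castSucc x u hune hune', inf_comm]
    · -- median k x ≤ LHS
      refine median_le k hk1 (by omega) x _ fun t ht hne => ?_
      apply le_inf
      · -- t.inf' ≤ M_k(cs)
        by_cases hl : Fin.last m ∈ t
        · obtain ⟨u, hu⟩ := subset_map_castSucc (t.erase (Fin.last m)) (notMem_erase _ _)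
          have hucard : u.card = m + 1 - k := by
            have := Finset.card_erase_of_mem hl
            rw [hu, Finset.card_map] at this; omega
          have hune : u.Nonempty := Finset.card_pos.mp (by omega)
          have hsub : u.map Fin.castSuccEmb ⊆ t := hu ▸ Finset.erase_subset _ _
          calc t.inf' hne x ≤ (u.map Fin.castSuccEmb).inf' (map_nonempty.mpr hune) x :=
                Finset.inf'_mono x hsub _
            _ = u.inf' hune (x ∘ Fin.castSucc) := inf'_map_castSucc x u hune _
            _ ≤ _ := le_median k hk1 hkm _ u hucard hune
        · obtain ⟨u, hu⟩ := subset_map_castSucc t hl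
          obtain ⟨v, hv, hvcard⟩ := Finset.exists_subset_card_eq (show m + 1 - k ≤ u.card by
            have : u.card = m + 1 + 1 - k := by rw [← Finset.card_map Fin.castSuccEmb, ← hu]; exact ht
            omega)
          have hvne : v.Nonempty := Finset.card_pos.mp (by omega)
          have hsub : v.map Fin.castSuccEmb ⊆ t := hu ▸ Finset.map_subset_map.mpr hv
          calc t.inf' hne x ≤ (v.map Fin.castSuccEmb).inf' (map_nonempty.mpr hvne) x :=
                Finset.inf'_mono x hsub _
            _ = v.inf' hvne (x ∘ Fin.castSucc) := inf'_map_castSucc x v hvne _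
            _ ≤ _ := le_median k hk1 hkm _ v hvcard hvne
      · -- t.inf' ≤ M_{k-1}(cs) ⊔ x last
        by_cases hl : Fin.last m ∈ t
        · exact le_trans (Finset.inf'_le x hl) le_sup_right
        · obtain ⟨u, hu⟩ := subset_map_castSucc t hl
          subst hu
          have hune : u.Nonempty := Finset.map_nonempty.mp hne
          have hucard : u.card = m + 1 - (k - 1) := by
            rw [Finset.card_map] at ht; omega
          refine le_trans ?_ le_sup_left
          calc (u.map Fin.castSuccEmb).inf' hne x
              = u.inf' hune (x ∘ Fin.castSucc) := inf'_map_castSucc x u hune _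
            _ ≤ _ := le_median (k - 1) (by omega) (by omega) _ u hucard hune
  · intro hk
    subst hk
    apply le_antisymm
    · refine median_inf_le 1 le_rfl hkm _ _ _ fun u hu hune => ?_
      have hune' : (u.map Fin.castSuccEmb).Nonempty := Finset.map_nonempty.mpr hune
      have hlast : Fin.last m ∉ u.map Fin.castSuccEmb := by
        simp only [mem_map]
        rintro ⟨b, -, hb⟩
        exact absurd hb (ne_of_lt (Fin.castSucc_lt_last b))
      have hcard : (insert (Fin.last m) (u.map Fin.castSuccEmb)).card = m + 1 + 1 - 1 := by
        rw [Finset.card_insert_of_notMem hlast, Finset.card_map]; omega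
      refine le_trans ?_
        (le_median 1 le_rfl (by omega) x _ hcard (Finset.insert_nonempty _ _))
      rw [Finset.inf'_insert (H := hune'), inf'_map_castSucc x u hune hune', inf_comm]
    · refine median_le 1 le_rfl (by omega) x _ fun t ht hne => ?_
      have hl : Fin.last m ∈ t := by
        have : t = Finset.univ := Finset.eq_univ_of_card t (by rw [ht]; simp)
        rw [this]; exact mem_univ _
      apply le_inf
      · obtain ⟨u, hu⟩ := subset_map_castSucc (t.erase (Fin.last m)) (notMem_erase _ _)
        have hucard : u.card = m + 1 - 1 := by
          have := Finset.card_erase_of_mem hl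
          rw [hu, Finset.card_map] at this; omega
        have hune : u.Nonempty := Finset.card_pos.mp (by omega)
        have hsub : u.map Fin.castSuccEmb ⊆ t := hu ▸ Finset.erase_subset _ _
        calc t.inf' hne x ≤ (u.map Fin.castSuccEmb).inf' (map_nonempty.mpr hune) x :=
              Finset.inf'_mono x hsub _
          _ = u.inf' hune (x ∘ Fin.castSucc) := inf'_map_castSucc x u hune _
          _ ≤ _ := le_median 1 le_rfl hkm _ u hucard hune
      · exact Finset.inf'_le x hl
end

section
/- Let L be a distributive lattice, A a nonempty set, n ≥ 2, and T : L^n → A a map. Then T is total orderization invariant if and only if T is symmetric and T(x_1, x_2, x_3,...,x_n) = T(x_1 ∧ x_2, x_1 ∨ x_2, x_3,...,x_n) holds for all x_1,...,x_n ∈ L. -/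
def TotalOrderizationInvariant {L : Type*} [DistribLattice L] {A : Type*} {n : ℕ}
    (T : (Fin n → L) → A) : Prop :=
  ∀ x : Fin n → L,
    T x = T fun k => median (k.1 + 1) (Nat.succ_le_succ (Nat.zero_le _)) k.2 x

def IsSymmetricMap {L A : Type*} {n : ℕ} (T : (Fin n → L) → A) : Prop :=
  ∀ (σ : Equiv.Perm (Fin n)) (x : Fin n → L), T (x ∘ σ) = T x

open Finset Function Relation

section Separation
variable {L : Type*} [DistribLattice L]

open Classical in
theorem DistribLattice.le_of_forall_latticeHom_bool_le {a b : L}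
    (h : ∀ f : LatticeHom L Bool, f a ≤ f b) : a ≤ b := by
  by_contra hab
  have hdisj : Disjoint (Order.PFilter.principal a : Set L) (Order.Ideal.principal b) :=
    Set.disjoint_left.mpr fun x hax hxb => hab (le_trans hax hxb)
  obtain ⟨J, hJ, hbJ, haJ⟩ := DistribLattice.prime_ideal_of_disjoint_filter_ideal hdisj
  let f : LatticeHom L Bool :=
    { toFun := fun x => decide (x ∉ J)
      map_sup' := fun x y => by simp [Order.Ideal.sup_mem_iff]
      map_inf' := fun x y => by
        have : x ⊓ y ∈ J ↔ x ∈ J ∨ y ∈ J :=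
          ⟨hJ.mem_or_mem, fun h => h.elim (J.lower inf_le_left) (J.lower inf_le_right)⟩
        simp [this, not_or] }
  have ha : f a = true := by
    simpa [f] using Set.disjoint_left.mp haJ (Order.PFilter.mem_principal.mpr le_rfl)
  have hb : f b = false := by simpa [f] using hbJ (Order.Ideal.mem_principal.mpr le_rfl)
  exact absurd (h f) (by simp [ha, hb])

theorem DistribLattice.eq_of_forall_latticeHom_bool_eq {a b : L}
    (h : ∀ f : LatticeHom L Bool, f a = f b) : a = b :=
  le_antisymm (le_of_forall_latticeHom_bool_le fun f => (h f).le)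
    (le_of_forall_latticeHom_bool_le fun f => (h f).ge)

end Separation

theorem Bool.true_le_iff (b : Bool) : true ≤ b ↔ b = true := by
  cases b <;> decide

section Median
variable {L : Type*} [DistribLattice L] {n k : ℕ} (hk1 : 1 ≤ k) (hkn : k ≤ n)

theorem map_median {M : Type*} [DistribLattice M] (f : LatticeHom L M) (x : Fin n → L) :
    f (median k hk1 hkn x) = median k hk1 hkn (f ∘ x) := by
  rw [median, map_finset_sup']
  exact sup'_congr _ rfl fun s _ => map_finset_inf' f _ _

theorem median_eq_true_iff (x : Fin n → Bool) :
    median k hk1 hkn x = true ↔ n + 1 - k ≤ #{t | x t} := by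
  rw [median, ← Bool.true_le_iff, le_sup'_iff, le_card_iff_exists_subset_card]
  simp only [le_inf'_iff]
  simp [Bool.true_le_iff, Finset.subset_iff, and_comm]

end Median

section Comparator
variable {ι L : Type*} [DecidableEq ι]

def comparator [Lattice L] (i j : ι) (x : ι → L) : ι → L :=
  update (update x i (x i ⊓ x j)) j (x i ⊔ x j)

variable [Lattice L] {i j t : ι} {x : ι → L}

@[simp]
theorem comparator_self (i : ι) (x : ι → L) : comparator i i x = x := by
  simp [comparator]

theorem comparator_apply_left (hij : i ≠ j) : comparator i j x i = x i ⊓ x j := by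
  simp [comparator, hij]

theorem comparator_comp_equiv {κ : Type*} [DecidableEq κ] (σ : κ ≃ ι) :
    comparator i j x ∘ σ = comparator (σ.symm i) (σ.symm j) (x ∘ σ) := by
  simp [comparator, update_comp_equiv]

theorem comp_comparator {M : Type*} [Lattice M] (f : LatticeHom L M) :
    f ∘ comparator i j x = comparator i j (f ∘ x) := by
  simp [comparator, comp_update]

theorem comparator_eq_self_or_comp_swap {L : Type*} [LinearOrder L] (x : ι → L) :
    comparator i j x = x ∨ comparator i j x = x ∘ Equiv.swap i j := by
  rcases le_total (x i) (x j) with h | h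
  · left
    simp [comparator, h]
  · right
    rcases eq_or_ne i j with rfl | hij
    · simp
    · rw [Equiv.comp_swap_eq_update, comparator, update_comm hij]
      simp [h]

theorem le_comparator {a : L} (h : ∀ t, a ≤ x t) (t : ι) : a ≤ comparator i j x t := by
  simp only [comparator, update_apply]
  split_ifs
  exacts [le_sup_of_le_left (h i), le_inf (h i) (h j), h t]

theorem Fin.cons_comparator {n : ℕ} (a : L) (i j : Fin n) (y : Fin n → L) :
    Fin.cons a (comparator i j y) =
      comparator i.succ j.succ (Fin.cons a y : Fin (n + 1) → L) := by
  simp [comparator, Fin.cons_update]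

end Comparator

section Medians
variable {L : Type*} [DistribLattice L] {n k : ℕ} (hk1 : 1 ≤ k) (hkn : k ≤ n)

theorem median_bool_comp_perm (σ : Equiv.Perm (Fin n)) (x : Fin n → Bool) :
    median k hk1 hkn (x ∘ σ) = median k hk1 hkn x := by
  have hcard : #{t | x (σ t)} = #{t | x t} := card_equiv σ (by simp)
  rw [Bool.eq_iff_iff, median_eq_true_iff, median_eq_true_iff]
  exact hcard ▸ Iff.rfl

theorem median_comp_perm (σ : Equiv.Perm (Fin n)) (x : Fin n → L) :
    median k hk1 hkn (x ∘ σ) = median k hk1 hkn x :=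
  DistribLattice.eq_of_forall_latticeHom_bool_eq fun f => by
    rw [map_median, map_median]
    exact median_bool_comp_perm hk1 hkn σ (f ∘ x)

theorem median_comparator (i j : Fin n) (x : Fin n → L) :
    median k hk1 hkn (comparator i j x) = median k hk1 hkn x :=
  DistribLattice.eq_of_forall_latticeHom_bool_eq fun f => by
    rw [map_median, map_median, comp_comparator]
    rcases comparator_eq_self_or_comp_swap (i := i) (j := j) (f ∘ x) with h | h <;> rw [h]
    exact median_bool_comp_perm hk1 hkn _ _

theorem median_bool_of_monotone {z : Fin n → Bool} (hz : Monotone z) (k : Fin n) :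
    median (k + 1) (Nat.succ_le_succ (Nat.zero_le _)) k.2 z = z k := by
  rw [Bool.eq_iff_iff, median_eq_true_iff, Nat.add_sub_add_right]
  constructor
  · intro hcard
    by_contra hk
    have : ({t | z t} : Finset (Fin n)) ⊆ Ioi k := fun t ht => by
      simp only [mem_filter, mem_univ, true_and] at ht
      by_contra htk
      have hle := hz (not_lt.1 (mt mem_Ioi.2 htk))
      rw [ht, Bool.true_le_iff] at hle
      exact hk hle
    have := (card_le_card this).trans_eq (Fin.card_Ioi k)
    omega
  · intro hk
    calc n - k = #(Ici k) := (Fin.card_Ici k).symm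
      _ ≤ #{t | z t} := card_le_card fun t ht =>
        by simpa [hk, Bool.true_le_iff] using hz (mem_Ici.1 ht)

theorem median_of_monotone {y : Fin n → L} (hy : Monotone y) (k : Fin n) :
    median (k + 1) (Nat.succ_le_succ (Nat.zero_le _)) k.2 y = y k :=
  DistribLattice.eq_of_forall_latticeHom_bool_eq fun f => by
    rw [map_median]
    exact median_bool_of_monotone ((OrderHomClass.mono f).comp hy) k

def medians (x : Fin n → L) : Fin n → L :=
  fun k => median (k.1 + 1) (Nat.succ_le_succ (Nat.zero_le _)) k.2 x

theorem medians_comp_perm (σ : Equiv.Perm (Fin n)) (x : Fin n → L) :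
    medians (x ∘ σ) = medians x :=
  funext fun _ => median_comp_perm _ _ σ x

theorem medians_comparator (i j : Fin n) (x : Fin n → L) :
    medians (comparator i j x) = medians x :=
  funext fun _ => median_comparator _ _ i j x

theorem medians_of_monotone {y : Fin n → L} (hy : Monotone y) : medians y = y :=
  funext (median_of_monotone hy)

end Medians

section Sorting
variable {ι L : Type*} [DecidableEq ι] [Lattice L]

def IsComparatorStep (x y : ι → L) : Prop :=
  ∃ i j, y = comparator i j x

namespace Relation.ReflTransGen
variable {x y : ι → L}

theorem eq_of_comparator_invariant {B : Type*} {G : (ι → L) → B}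
    (hG : ∀ i j x, G (comparator i j x) = G x) (h : ReflTransGen IsComparatorStep x y) :
    G x = G y := by
  induction h with
  | refl => rfl
  | tail _ hyz ih =>
    obtain ⟨i, j, rfl⟩ := hyz
    rw [ih, hG]

theorem le_of_comparatorStep {a : L} (h : ReflTransGen IsComparatorStep x y)
    (hx : ∀ t, a ≤ x t) (t : ι) : a ≤ y t := by
  induction h generalizing t with
  | refl => exact hx t
  | tail _ hyz ih =>
    obtain ⟨i, j, rfl⟩ := hyz
    exact le_comparator ih t

theorem fin_cons {n : ℕ} {y z : Fin n → L} (h : ReflTransGen IsComparatorStep y z) (a : L) :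
    ReflTransGen IsComparatorStep (Fin.cons a y : Fin (n + 1) → L) (Fin.cons a z) :=
  ReflTransGen.lift (p := IsComparatorStep) (Fin.cons a)
    (fun _ _ ⟨i, j, hij⟩ => ⟨i.succ, j.succ, hij ▸ Fin.cons_comparator a i j _⟩) _ _ h

end Relation.ReflTransGen

theorem exists_reflTransGen_comparatorStep_forall_head_le :
    ∀ {m : ℕ} (x : Fin (m + 1) → L),
      ∃ y, ReflTransGen IsComparatorStep x y ∧ ∀ t, y 0 ≤ y t
  | 0, x => ⟨x, .refl, fun t => by rw [Fin.fin_one_eq_zero t]⟩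
  | m + 1, x => by
    obtain ⟨y, hxy, hy⟩ := exists_reflTransGen_comparatorStep_forall_head_le (Fin.tail x)
    refine ⟨comparator 0 1 (Fin.cons (x 0) y), ?_, fun t => ?_⟩
    · have := hxy.fin_cons (x 0)
      rw [Fin.cons_self_tail] at this
      exact this.tail ⟨0, 1, rfl⟩
    · rw [comparator_apply_left Fin.zero_ne_one]
      refine le_comparator (fun s => Fin.cases ?_ (fun s => ?_) s) t
      · exact inf_le_left
      · exact inf_le_right.trans (hy s)

theorem exists_reflTransGen_comparatorStep_monotone :
    ∀ {n : ℕ} (x : Fin n → L), ∃ y, ReflTransGen IsComparatorStep x y ∧ Monotone y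
  | 0, x => ⟨x, .refl, fun a => a.elim0⟩
  | m + 1, x => by
    obtain ⟨y, hxy, hy⟩ := exists_reflTransGen_comparatorStep_forall_head_le x
    obtain ⟨z, hyz, hz⟩ := exists_reflTransGen_comparatorStep_monotone (Fin.tail y)
    have hyz' : ReflTransGen IsComparatorStep y (Fin.cons (y 0) z) := by
      simpa using hyz.fin_cons (y 0)
    have hz0 : ∀ t, y 0 ≤ z t := hyz.le_of_comparatorStep fun s => hy s.succ
    refine ⟨Fin.cons (y 0) z, hxy.trans hyz', monotone_iff_forall_lt.2 ?_⟩
    exact (Fin.liftFun_cons (· ≤ ·)).2 ⟨hz0, monotone_iff_forall_lt.1 hz⟩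

end Sorting

theorem Equiv.Perm.exists_apply_eq_and_apply_eq {α : Type*} [DecidableEq α] {a b c d : α}
    (hab : a ≠ b) (hcd : c ≠ d) : ∃ σ : Equiv.Perm α, σ a = c ∧ σ b = d := by
  refine ⟨Equiv.swap a c * Equiv.swap b (Equiv.swap a c d), ?_, by simp⟩
  have had : a ≠ Equiv.swap a c d := fun h => hcd (by simpa using congrArg (Equiv.swap a c) h)
  simp [Equiv.swap_apply_of_ne_of_ne hab had]

theorem IsSymmetricMap.comparator_invariant {L A : Type*} [Lattice L] {n : ℕ}
    {T : (Fin n → L) → A} (hT : IsSymmetricMap T) {a b : Fin n} (hab : a ≠ b)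
    (hTab : ∀ x, T x = T (comparator a b x)) (i j : Fin n) (x : Fin n → L) :
    T (comparator i j x) = T x := by
  rcases eq_or_ne i j with rfl | hij
  · rw [comparator_self]
  obtain ⟨σ, hσi, hσj⟩ := Equiv.Perm.exists_apply_eq_and_apply_eq hab hij
  calc T (comparator i j x) = T (comparator i j x ∘ σ) := (hT σ _).symm
    _ = T (comparator a b (x ∘ σ)) := by
      rw [comparator_comp_equiv, ← hσi, ← hσj, Equiv.symm_apply_apply, Equiv.symm_apply_apply]
    _ = T x := by rw [← hTab, hT]

/-- A map on n ≥ 2 variables is total orderization invariant iff it is symmetric and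
invariant under replacing the first two arguments by their meet and join. -/
theorem toi_iff_symm_and_meetJoin {L A : Type*} [DistribLattice L]
    {n : ℕ} (hn : 2 ≤ n) (T : (Fin n → L) → A) :
    TotalOrderizationInvariant T ↔
      (IsSymmetricMap T ∧ ∀ x : Fin n → L,
        T x = T (Function.update
          (Function.update x ⟨0, by omega⟩ (x ⟨0, by omega⟩ ⊓ x ⟨1, by omega⟩))
          ⟨1, by omega⟩ (x ⟨0, by omega⟩ ⊔ x ⟨1, by omega⟩))) := by
  change (∀ x, T x = T (medians x)) ↔ _
  constructor
  · intro hT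
    refine ⟨fun σ x => ?_, fun x => ?_⟩
    · rw [hT (x ∘ σ), medians_comp_perm, ← hT]
    · change T x = T (comparator _ _ x)
      rw [hT (comparator _ _ x), medians_comparator, ← hT]
  · rintro ⟨hsymm, h01⟩ x
    obtain ⟨y, hxy, hy⟩ := exists_reflTransGen_comparatorStep_monotone x
    calc T x = T y := hxy.eq_of_comparator_invariant (hsymm.comparator_invariant (by simp) h01)
      _ = T (medians y) := by rw [medians_of_monotone hy]
      _ = T (medians x) := by rw [hxy.eq_of_comparator_invariant medians_comparator]
end

section
/- Let L and M be distributive lattices, n ≥ 2, and T : L^n → M a symmetric lattice n-homomorphism. Then the diagonal map P_T(x) := T(x,...,x) is a lattice homomorphism: P_T(x ∨ y) = P_T(x) ∨ P_T(y) and P_T(x ∧ y) = P_T(x) ∧ P_T(y) for all x, y ∈ L. -/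
/-- `T : Lⁿ → M` is a lattice n-homomorphism: in each coordinate separately it
preserves binary joins and binary meets. -/
def IsLatticeMultiHom {L M : Type*} [DistribLattice L] [DistribLattice M] {n : ℕ}
    (T : (Fin n → L) → M) : Prop :=
  ∀ (x : Fin n → L) (i : Fin n) (y : L),
    T (Function.update x i (x i ⊔ y)) = T x ⊔ T (Function.update x i y) ∧
    T (Function.update x i (x i ⊓ y)) = T x ⊓ T (Function.update x i y)

/-- `P : L → M` is a lattice homomorphism. -/
def IsLatticeHomMap {L M : Type*} [DistribLattice L] [DistribLattice M] (P : L → M) : Prop :=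
  ∀ a b : L, P (a ⊔ b) = P a ⊔ P b ∧ P (a ⊓ b) = P a ⊓ P b

/-!
Expanding `T (x ⊔ y, …, x ⊔ y)` coordinatewise writes it as the join of the values `b k` of `T`
at tuples with `k` entries `x` and `n - k` entries `y`; by symmetry these depend only on `k`, and
`b 0`, `b n` are the two diagonal values. Expanding `T` at a tuple with `a` entries `x ⊓ y` and
`n - a` entries `x ⊔ y` in the two possible orders gives
`⨅ p ≤ a, ⨆ q ≤ n - a, b (p + q) = ⨆ q ≤ n - a, ⨅ p ≤ a, b (p + q)`, and a downward induction
on `w` turns these identities into `b q ⊓ ⋯ ⊓ b (q + w) ≤ b 0 ⊔ b n`. The statement for meets is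
the statement for joins in the order duals.
-/

open Finset Function

section Lattice

variable {M : Type*} [Lattice M]

theorem Finset.sup'_powerset_comp_card {α : Type*} (s : Finset α) (g : ℕ → M) :
    s.powerset.sup' s.powerset_nonempty (fun t => g #t) =
      (range (#s + 1)).sup' nonempty_range_add_one g := by
  apply le_antisymm
  · exact sup'_le _ _ fun t ht =>
      le_sup' g (mem_range_succ_iff.2 (card_le_card (mem_powerset.1 ht)))
  · refine sup'_le _ _ fun k hk => ?_
    obtain ⟨t, hts, rfl⟩ := exists_subset_card_eq (mem_range_succ_iff.1 hk)
    exact le_sup' (fun t => g #t) (mem_powerset.2 hts)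

theorem Finset.inf'_powerset_comp_card {α : Type*} (s : Finset α) (g : ℕ → M) :
    s.powerset.inf' s.powerset_nonempty (fun t => g #t) =
      (range (#s + 1)).inf' nonempty_range_add_one g :=
  sup'_powerset_comp_card (M := Mᵒᵈ) s g

theorem inf'_window_le_sup_ends (b : ℕ → M) (n : ℕ)
    (hswap : ∀ a ≤ n,
      (range (a + 1)).inf' nonempty_range_add_one
          (fun p => (range (n - a + 1)).sup' nonempty_range_add_one fun q => b (p + q)) ≤
        (range (n - a + 1)).sup' nonempty_range_add_one
          (fun q => (range (a + 1)).inf' nonempty_range_add_one fun p => b (p + q)))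
    {q w : ℕ} (hqw : q + w ≤ n) :
    (range (w + 1)).inf' nonempty_range_add_one (fun p => b (q + p)) ≤ b 0 ⊔ b n := by
  rcases Nat.eq_zero_or_pos q with rfl | hq
  · exact (inf'_le _ (mem_range_succ_iff.2 (Nat.zero_le w))).trans le_sup_left
  rcases hqw.eq_or_lt with hqw | hqw
  · exact (inf'_le _ (mem_range_succ_iff.2 le_rfl)).trans (hqw ▸ le_sup_right)
  calc (range (w + 1)).inf' nonempty_range_add_one (fun p => b (q + p))
      ≤ (range (w + 1 + 1)).inf' nonempty_range_add_one
          (fun p => (range (n - (w + 1) + 1)).sup' nonempty_range_add_one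
            fun r => b (p + r)) := by
        refine le_inf' _ _ fun p hp => ?_
        rw [mem_range_succ_iff] at hp
        -- some point `p + r` with `r ≤ n - (w + 1)` lies in the window `[q, q + w]`
        calc _ ≤ b (q + (max p q - q)) :=
              inf'_le _ (mem_range_succ_iff.2 (by omega : max p q - q ≤ w))
          _ = b (p + (q - p)) := by congr 1; omega
          _ ≤ _ := le_sup' (fun r => b (p + r))
              (mem_range_succ_iff.2 (by omega : q - p ≤ n - (w + 1)))
    _ ≤ (range (n - (w + 1) + 1)).sup' nonempty_range_add_one
          (fun r => (range (w + 1 + 1)).inf' nonempty_range_add_one fun p => b (p + r)) :=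
        hswap (w + 1) (by omega)
    _ ≤ b 0 ⊔ b n := by
        refine sup'_le _ _ fun r hr => ?_
        simp_rw [add_comm _ r]
        exact inf'_window_le_sup_ends b n hswap (by rw [mem_range_succ_iff] at hr; omega)
termination_by n - w

end Lattice

theorem IsSymmetricMap.map_piecewise_eq_of_card_eq {L A : Type*} {n : ℕ}
    {T : (Fin n → L) → A} (hT : IsSymmetricMap T) (x y : L) {S S' : Finset (Fin n)}
    (h : #S = #S') :
    T (S.piecewise (fun _ => x) (fun _ => y)) = T (S'.piecewise (fun _ => x) (fun _ => y)) := by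
  set σ : Equiv.Perm (Fin n) := (Finset.equivOfCardEq h).extendSubtype
  have hσ : ∀ i, σ i ∈ S' ↔ i ∈ S := fun i => by
    by_cases hi : i ∈ S
    · exact iff_of_true (Equiv.extendSubtype_mem _ i hi) hi
    · exact iff_of_false (Equiv.extendSubtype_not_mem _ i hi) hi
  rw [← hT σ (S'.piecewise _ _)]
  congr 1
  ext i
  simp only [comp_apply, piecewise, hσ]

theorem IsSymmetricMap.exists_map_piecewise_eq_card {L A : Type*} {n : ℕ}
    {T : (Fin n → L) → A} (hT : IsSymmetricMap T) (x y : L) :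
    ∃ b : ℕ → A, ∀ S : Finset (Fin n), T (S.piecewise (fun _ => x) (fun _ => y)) = b #S := by
  refine ⟨fun k =>
    T (({i : Fin n | (i : ℕ) < k} : Finset _).piecewise (fun _ => x) (fun _ => y)), fun S => ?_⟩
  refine hT.map_piecewise_eq_of_card_eq x y ?_
  rw [Fin.card_filter_val_lt, min_eq_right (card_le_univ S |>.trans_eq (Fintype.card_fin n))]

namespace IsLatticeMultiHom

variable {L M : Type*} [DistribLattice L] [DistribLattice M] {n : ℕ} {T : (Fin n → L) → M}

theorem dual (hT : IsLatticeMultiHom T) : IsLatticeMultiHom (L := Lᵒᵈ) (M := Mᵒᵈ) T :=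
  fun x i y => ⟨(hT x i y).2, (hT x i y).1⟩

theorem map_update_sup (hT : IsLatticeMultiHom T) (w : Fin n → L) (i : Fin n) (a b : L) :
    T (update w i (a ⊔ b)) = T (update w i a) ⊔ T (update w i b) := by
  simpa using (hT (update w i a) i b).1

theorem map_piecewise_sup (hT : IsLatticeMultiHom T) (g h f : Fin n → L) (U : Finset (Fin n)) :
    T (U.piecewise (g ⊔ h) f) =
      U.powerset.sup' U.powerset_nonempty fun Q => T (Q.piecewise g (U.piecewise h f)) := by
  induction U using Finset.induction_on generalizing f with
  | empty => simp
  | insert j U hj ih =>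
    rw [piecewise_insert, Pi.sup_apply, hT.map_update_sup, update_piecewise_of_notMem _ _ _ hj,
      update_piecewise_of_notMem _ _ _ hj, ih, ih]
    simp only [powerset_insert]
    rw [sup'_union U.powerset_nonempty (U.powerset_nonempty.image _), sup'_image, sup_comm]
    congr 1 <;> refine sup'_congr _ rfl fun Q hQ => ?_
    · rw [piecewise_insert, update_piecewise_of_notMem _ _ _ hj]
    · have hjQ : j ∉ Q := fun hjQ => hj (mem_powerset.1 hQ hjQ)
      simp only [comp_apply, piecewise_insert, update_piecewise_of_notMem _ _ _ hjQ,
        update_piecewise_of_notMem _ _ _ hj, update_idem]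

theorem map_piecewise_inf (hT : IsLatticeMultiHom T) (g h f : Fin n → L) (U : Finset (Fin n)) :
    T (U.piecewise (g ⊓ h) f) =
      U.powerset.inf' U.powerset_nonempty fun Q => T (Q.piecewise g (U.piecewise h f)) :=
  hT.dual.map_piecewise_sup (L := Lᵒᵈ) g h f U

theorem map_piecewise_inf_sup (hT : IsLatticeMultiHom T) (x y : L) (V : Finset (Fin n)) :
    T (V.piecewise (fun _ => x ⊓ y) (fun _ => x ⊔ y)) =
      V.powerset.inf' V.powerset_nonempty fun P =>
        Vᶜ.powerset.sup' Vᶜ.powerset_nonempty fun Q =>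
          T ((P ∪ Q).piecewise (fun _ => x) (fun _ => y)) := by
  rw [show (fun _ => x ⊓ y : Fin n → L) = (fun _ => x) ⊓ (fun _ => y) from rfl,
    hT.map_piecewise_inf]
  refine inf'_congr _ rfl fun P hP => ?_
  rw [mem_powerset] at hP
  have hsplit : P.piecewise (fun _ => x) (V.piecewise (fun _ => y) (fun _ => x ⊔ y)) =
      Vᶜ.piecewise ((fun _ => x) ⊔ (fun _ => y)) (P.piecewise (fun _ => x) (fun _ => y)) := by
    ext i
    by_cases i ∈ P <;> by_cases i ∈ V <;> simp_all [piecewise, subset_iff]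
  rw [hsplit, hT.map_piecewise_sup]
  refine sup'_congr _ rfl fun Q hQ => ?_
  rw [mem_powerset] at hQ
  congr 1
  ext i
  by_cases i ∈ P <;> by_cases i ∈ Q <;> by_cases i ∈ V <;> simp_all [piecewise, subset_iff]

theorem map_piecewise_inf_sup_eq {x y : L} {b : ℕ → M} (hT : IsLatticeMultiHom T)
    (hb : ∀ S : Finset (Fin n), T (S.piecewise (fun _ => x) (fun _ => y)) = b #S)
    (V : Finset (Fin n)) :
    T (V.piecewise (fun _ => x ⊓ y) (fun _ => x ⊔ y)) =
      (range (#V + 1)).inf' nonempty_range_add_one fun p =>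
        (range (#Vᶜ + 1)).sup' nonempty_range_add_one fun q => b (p + q) := by
  rw [hT.map_piecewise_inf_sup, ← inf'_powerset_comp_card]
  refine inf'_congr _ rfl fun P hP => ?_
  rw [← sup'_powerset_comp_card]
  refine sup'_congr _ rfl fun Q hQ => ?_
  rw [hb, card_union_of_disjoint]
  exact disjoint_of_subset_left (mem_powerset.1 hP)
    (disjoint_of_subset_right (mem_powerset.1 hQ) disjoint_compl_right)

theorem inf'_sup'_eq_sup'_inf' {x y : L} {b : ℕ → M} (hT : IsLatticeMultiHom T)
    (hb : ∀ S : Finset (Fin n), T (S.piecewise (fun _ => x) (fun _ => y)) = b #S)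
    {a : ℕ} (ha : a ≤ n) :
    (range (a + 1)).inf' nonempty_range_add_one
        (fun p => (range (n - a + 1)).sup' nonempty_range_add_one fun q => b (p + q)) =
      (range (n - a + 1)).sup' nonempty_range_add_one
        (fun q => (range (a + 1)).inf' nonempty_range_add_one fun p => b (p + q)) := by
  obtain ⟨V, -, hV⟩ := exists_subset_card_eq (s := (univ : Finset (Fin n))) (by simpa using ha)
  have hVc : #Vᶜ = n - a := by rw [card_compl, Fintype.card_fin, hV]
  have h := hT.map_piecewise_inf_sup_eq hb V
  have h' := hT.dual.map_piecewise_inf_sup_eq (L := Lᵒᵈ) (M := Mᵒᵈ) hb Vᶜ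
  rw [compl_compl, piecewise_compl] at h'
  rw [hV, hVc] at h h'
  calc _ = T (V.piecewise (fun _ => x ⊓ y) (fun _ => x ⊔ y)) := h.symm
    _ = (range (n - a + 1)).sup' nonempty_range_add_one
          (fun q => (range (a + 1)).inf' nonempty_range_add_one fun p => b (q + p)) := h'
    _ = _ := by simp_rw [add_comm]

theorem map_const_sup (hT : IsLatticeMultiHom T) (hsymm : IsSymmetricMap T) (x y : L) :
    T (fun _ => x ⊔ y) = T (fun _ => x) ⊔ T (fun _ => y) := by
  obtain ⟨b, hb⟩ := hsymm.exists_map_piecewise_eq_card x y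
  have hb0 : b 0 = T (fun _ => y) := by simpa using (hb ∅).symm
  have hbn : b n = T (fun _ => x) := by simpa using (hb univ).symm
  have hexp : T (fun _ => x ⊔ y) = (range (n + 1)).sup' nonempty_range_add_one b := by
    simpa using hT.map_piecewise_inf_sup_eq hb ∅
  rw [hexp, ← hb0, ← hbn, sup_comm]
  refine le_antisymm (sup'_le _ _ fun k hk => ?_)
    (sup_le (le_sup' b (by simp)) (le_sup' b (by simp)))
  simpa using inf'_window_le_sup_ends b n (fun a ha => (hT.inf'_sup'_eq_sup'_inf' hb ha).le)
    (q := k) (w := 0) (by simpa using hk)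

end IsLatticeMultiHom

theorem diagonal_isLatticeHom_general {L M : Type*} [DistribLattice L] [DistribLattice M]
    {n : ℕ} (T : (Fin n → L) → M) (hT : IsLatticeMultiHom T)
    (hsymm : IsSymmetricMap T) (x y : L) :
    (T fun _ => x ⊔ y) = (T fun _ => x) ⊔ (T fun _ => y) ∧
    (T fun _ => x ⊓ y) = (T fun _ => x) ⊓ (T fun _ => y) :=
  ⟨hT.map_const_sup hsymm x y, hT.dual.map_const_sup (L := Lᵒᵈ) (M := Mᵒᵈ) hsymm x y⟩

/-- The diagonal of a symmetric lattice n-homomorphism between distributive lattices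
is a lattice homomorphism. -/
theorem diagonal_isLatticeHom {L M : Type*} [DistribLattice L] [DistribLattice M]
    {n : ℕ} (hn : 2 ≤ n) (T : (Fin n → L) → M) (hT : IsLatticeMultiHom T)
    (hsymm : IsSymmetricMap T) (x y : L) :
    (T fun _ => x ⊔ y) = (T fun _ => x) ⊔ (T fun _ => y) ∧
    (T fun _ => x ⊓ y) = (T fun _ => x) ⊓ (T fun _ => y) :=
  diagonal_isLatticeHom_general T hT hsymm x y
end
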